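/- For every integer ν ≥ 1, the degree-ν coefficient of the formal power series exp(M(t)) = Σ_{l≥0} M(t)^l / l! is at most (1/λ)·e^λ · M_ν; that is, in positive degrees e^{M(t)} ≺ (1/λ)·e^λ · M(t). -/

import Mathlib

/-- The exponential `exp(A(t)) = Σ_{l≥0} A(t)^l / l!` of a formal power series, defined
coefficientwise (the sum of coefficients converges trivially when `A` has zero constant
term, since then only the terms with `l ≤ ν` contribute in degree `ν`). -/
noncomputable def pexp (A : PowerSeries ℝ) : PowerSeries ℝ :=
  PowerSeries.mk fun ν => ∑' (l : ℕ), (1 / (Nat.factorial l : ℝ)) * PowerSeries.coeff ν (A ^ l)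

/-!
The coefficients `n⁻²` are almost closed under convolution:
`Σ_{i+j=n} i⁻² j⁻² ≤ 8 n⁻²`, because `n² / (i² j²) = (1/i + 1/j)² ≤ 2 (i⁻² + j⁻²)` and
`Σ i⁻² ≤ 2`. Hence `M² ≺ M / (2c) ≺ λ M`, so by induction `M^(l+1) ≺ λ^l M`, and in positive
degrees `e^M ≺ Σ_{l ≥ 1} λ^(l-1) / l! · M ≺ λ⁻¹ e^λ M`.
-/

open Finset PowerSeries
open scoped Nat

theorem inv_sq_mul_inv_sq_le {a b : ℝ} (ha : 0 ≤ a) (hb : 0 ≤ b) :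
    (a ^ 2)⁻¹ * (b ^ 2)⁻¹ ≤ 2 / (a + b) ^ 2 * ((a ^ 2)⁻¹ + (b ^ 2)⁻¹) := by
  rcases ha.eq_or_lt with rfl | ha
  · rw [zero_pow two_ne_zero, inv_zero, zero_mul]; positivity
  rcases hb.eq_or_lt with rfl | hb
  · rw [zero_pow two_ne_zero, inv_zero, mul_zero]; positivity
  rw [div_mul_eq_mul_div, le_div_iff₀ (by positivity)]
  field_simp
  nlinarith [sq_nonneg (a - b), mul_pos ha hb]

theorem sum_range_inv_sq_le_two (n : ℕ) : ∑ k ∈ range n, ((k : ℝ) ^ 2)⁻¹ ≤ 2 := by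
  rcases n.eq_zero_or_pos with rfl | hn
  · norm_num
  rw [range_eq_Ico, sum_eq_sum_Ico_succ_bot hn, Ico_add_one_left_eq_Ioo]
  simpa using sum_Ioo_inv_sq_le (α := ℝ) 0 n

theorem sum_antidiagonal_inv_sq_mul_inv_sq_le (n : ℕ) :
    ∑ p ∈ antidiagonal n, ((p.1 : ℝ) ^ 2)⁻¹ * ((p.2 : ℝ) ^ 2)⁻¹ ≤ 8 / (n : ℝ) ^ 2 := by
  have hterm : ∀ p ∈ antidiagonal n, ((p.1 : ℝ) ^ 2)⁻¹ * ((p.2 : ℝ) ^ 2)⁻¹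
      ≤ 2 / (n : ℝ) ^ 2 * (((p.1 : ℝ) ^ 2)⁻¹ + ((p.2 : ℝ) ^ 2)⁻¹) := by
    intro p hp
    rw [← HasAntidiagonal.mem_antidiagonal.mp hp, Nat.cast_add]
    exact inv_sq_mul_inv_sq_le p.1.cast_nonneg p.2.cast_nonneg
  have hhalf : ∑ p ∈ antidiagonal n, ((p.1 : ℝ) ^ 2)⁻¹ ≤ 2 := by
    rw [Nat.sum_antidiagonal_eq_sum_range_succ_mk]
    exact sum_range_inv_sq_le_two _
  calc _ ≤ ∑ p ∈ antidiagonal n, 2 / (n : ℝ) ^ 2 * (((p.1 : ℝ) ^ 2)⁻¹ + ((p.2 : ℝ) ^ 2)⁻¹) :=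
        sum_le_sum hterm
    _ = 2 / (n : ℝ) ^ 2 * (2 * ∑ p ∈ antidiagonal n, ((p.1 : ℝ) ^ 2)⁻¹) := by
        rw [← mul_sum, sum_add_distrib, two_mul,
          ← Nat.sum_antidiagonal_swap (f := fun p => ((p.1 : ℝ) ^ 2)⁻¹)]
        rfl
    _ ≤ 8 / (n : ℝ) ^ 2 := by
        rw [show (8 : ℝ) / n ^ 2 = 2 / n ^ 2 * (2 * 2) by ring]
        gcongr

theorem coeff_pow_eq_zero_of_lt {A : PowerSeries ℝ} (hA : constantCoeff A = 0) {n l : ℕ}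
    (h : n < l) : coeff n (A ^ l) = 0 :=
  X_pow_dvd_iff.mp (pow_dvd_pow_of_dvd (X_dvd_iff.mpr hA) l) n h

theorem coeff_pexp_eq_sum {A : PowerSeries ℝ} (hA : constantCoeff A = 0) (n : ℕ) :
    coeff n (pexp A) = ∑ l ∈ range (n + 1), 1 / (l ! : ℝ) * coeff n (A ^ l) := by
  rw [pexp, coeff_mk]
  refine tsum_eq_sum fun l hl => ?_
  rw [coeff_pow_eq_zero_of_lt hA (by simpa using hl), mul_zero]

theorem coeff_pow_succ_le_of_coeff_mul_self_le {A : PowerSeries ℝ} {r : ℝ} (hr : 0 ≤ r)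
    (hA : ∀ n, 0 ≤ coeff n A) (hsq : ∀ n, coeff n (A * A) ≤ r * coeff n A) (l n : ℕ) :
    coeff n (A ^ (l + 1)) ≤ r ^ l * coeff n A := by
  induction l generalizing n with
  | zero => simp
  | succ l ih =>
    calc coeff n (A ^ (l + 1 + 1))
        = ∑ p ∈ antidiagonal n, coeff p.1 (A ^ (l + 1)) * coeff p.2 A := by
          rw [pow_succ, coeff_mul]
      _ ≤ ∑ p ∈ antidiagonal n, r ^ l * (coeff p.1 A * coeff p.2 A) := by
          refine sum_le_sum fun p _ => ?_
          rw [← mul_assoc]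
          exact mul_le_mul_of_nonneg_right (ih _) (hA _)
      _ = r ^ l * coeff n (A * A) := by rw [coeff_mul, mul_sum]
      _ ≤ r ^ (l + 1) * coeff n A := by
          rw [pow_succ, mul_assoc]; gcongr; exact hsq n

theorem coeff_pexp_le_of_coeff_mul_self_le {A : PowerSeries ℝ} {r : ℝ} (hr : 0 < r)
    (h0 : constantCoeff A = 0) (hA : ∀ n, 0 ≤ coeff n A) (hsq : ∀ n, coeff n (A * A) ≤ r * coeff n A) {n : ℕ}
    (hn : 1 ≤ n) : coeff n (pexp A) ≤ 1 / r * Real.exp r * coeff n A := by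
  have hexp : ∑ l ∈ range n, r ^ (l + 1) / ((l + 1)! : ℝ) ≤ Real.exp r := by
    have h := Real.sum_le_exp_of_nonneg hr.le (n + 1)
    rw [sum_range_succ'] at h
    simp only [pow_zero, Nat.factorial_zero, Nat.cast_one, div_one] at h
    linarith
  rw [coeff_pexp_eq_sum h0, sum_range_succ']
  calc ∑ l ∈ range n, 1 / ((l + 1)! : ℝ) * coeff n (A ^ (l + 1)) + 1 / (0 ! : ℝ) * coeff n (A ^ 0)
      ≤ ∑ l ∈ range n, r ^ (l + 1) / ((l + 1)! : ℝ) * (1 / r * coeff n A) := by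
        rw [pow_zero, coeff_one, if_neg (by omega), mul_zero, add_zero]
        refine sum_le_sum fun l _ => ?_
        calc 1 / ((l + 1)! : ℝ) * coeff n (A ^ (l + 1))
            ≤ 1 / ((l + 1)! : ℝ) * (r ^ l * coeff n A) := by
              gcongr; exact coeff_pow_succ_le_of_coeff_mul_self_le hr.le hA hsq l n
          _ = _ := by field_simp; ring
    _ ≤ 1 / r * Real.exp r * coeff n A := by
        rw [← sum_mul, mul_comm, mul_right_comm]
        gcongr
        exact hA n

section InverseSquareMajorant

/-- The constant coefficient is `K * c ^ 0 / 0 = 0`. -/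
noncomputable def inverseSquareMajorant (K c : ℝ) : PowerSeries ℝ :=
  mk fun n => K * c ^ n / (n : ℝ) ^ 2

variable {K c : ℝ}

theorem constantCoeff_inverseSquareMajorant : constantCoeff (inverseSquareMajorant K c) = 0 := by
  simp [inverseSquareMajorant, ← coeff_zero_eq_constantCoeff_apply]

theorem coeff_inverseSquareMajorant_nonneg (hK : 0 ≤ K) (hc : 0 ≤ c) (n : ℕ) :
    0 ≤ coeff n (inverseSquareMajorant K c) := by
  rw [inverseSquareMajorant, coeff_mk]; positivity

theorem coeff_inverseSquareMajorant_mul_self_le (hc : 0 ≤ c) (n : ℕ) :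
    coeff n (inverseSquareMajorant K c * inverseSquareMajorant K c)
      ≤ 8 * K * coeff n (inverseSquareMajorant K c) := by
  have hterm : ∀ p ∈ antidiagonal n, K * c ^ p.1 / (p.1 : ℝ) ^ 2 * (K * c ^ p.2 / (p.2 : ℝ) ^ 2)
      = K ^ 2 * c ^ n * (((p.1 : ℝ) ^ 2)⁻¹ * ((p.2 : ℝ) ^ 2)⁻¹) := by
    intro p hp
    rw [← HasAntidiagonal.mem_antidiagonal.mp hp, pow_add]
    ring
  calc coeff n (inverseSquareMajorant K c * inverseSquareMajorant K c)
      = K ^ 2 * c ^ n * ∑ p ∈ antidiagonal n, ((p.1 : ℝ) ^ 2)⁻¹ * ((p.2 : ℝ) ^ 2)⁻¹ := by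
        simp only [coeff_mul, inverseSquareMajorant, coeff_mk, mul_sum]
        exact sum_congr rfl hterm
    _ ≤ K ^ 2 * c ^ n * (8 / (n : ℝ) ^ 2) := by
        gcongr; exact sum_antidiagonal_inv_sq_mul_inv_sq_le n
    _ = 8 * K * coeff n (inverseSquareMajorant K c) := by
        rw [inverseSquareMajorant, coeff_mk]; ring

end InverseSquareMajorant

/-- Fix `c > 0`, `λ = 1/c`, and the majorant series `M(t)` with
coefficients `M ν = (1/(16c))·c^ν/ν²` and zero constant term. Then for every `ν ≥ 1` the
degree-`ν` coefficient of `exp(M(t)) = Σ_{l≥0} M(t)^l/l!` is at most `(1/λ)·e^λ·M ν`;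
that is, in positive degrees `e^{M(t)} ≺ (1/λ)·e^λ·M(t)`. -/
theorem stmt_3 (c lam : ℝ) (hc : 0 < c) (hlam : lam = 1 / c)
    (M : ℕ → ℝ) (hM : ∀ ν : ℕ, M ν = 1 / (16 * c) * c ^ ν / (ν : ℝ) ^ 2)
    (Mser : PowerSeries ℝ)
    (hMser : Mser = PowerSeries.mk fun ν => if ν = 0 then 0 else M ν) :
    ∀ ν : ℕ, 1 ≤ ν →
      PowerSeries.coeff ν (pexp Mser) ≤ (1 / lam) * Real.exp lam * M ν := by
  intro ν hν
  have hlam_pos : 0 < lam := by rw [hlam]; positivity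
  have hMser_eq : Mser = inverseSquareMajorant (1 / (16 * c)) c := by
    rw [hMser, inverseSquareMajorant]
    ext n
    rcases eq_or_ne n 0 with rfl | hn <;> simp [*]
  have hnonneg := coeff_inverseSquareMajorant_nonneg (K := 1 / (16 * c)) (by positivity) hc.le
  have hsq (n : ℕ) : coeff n (Mser * Mser) ≤ lam * coeff n Mser := by
    rw [hMser_eq]
    calc _ ≤ 8 * (1 / (16 * c)) * coeff n (inverseSquareMajorant (1 / (16 * c)) c) :=
          coeff_inverseSquareMajorant_mul_self_le hc.le n
      _ ≤ lam * coeff n (inverseSquareMajorant (1 / (16 * c)) c) := by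
          gcongr
          · exact hnonneg n
          · rw [hlam]; field_simp; norm_num
  calc coeff ν (pexp Mser) ≤ 1 / lam * Real.exp lam * coeff ν Mser :=
        coeff_pexp_le_of_coeff_mul_self_le hlam_pos (hMser_eq ▸ constantCoeff_inverseSquareMajorant)
          (hMser_eq ▸ hnonneg) hsq hν
    _ = 1 / lam * Real.exp lam * M ν := by rw [hMser_eq, inverseSquareMajorant, coeff_mk, hM]
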